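/- Fix n ≥ 1 and real numbers (V_k)_{k ∈ B_n} with V_{2k} + V_{2k+1} ≠ 0 for all 0 ≤ k ≤ 2^{n−1}−1, and suppose H_n and (RH)_{n−1} are invertible. Then for all φ, ψ ∈ ℓ²(B_n): ⟨φ, H_n^{−1} ψ⟩ = ⟨Sφ, (RH)_{n−1}^{−1} Sψ⟩ + ⟨U_f*φ, V_ff^{−1} U_f*ψ⟩, where S = U_e* − V_fe V_ff^{−1} U_f*. -/

import Mathlib

/-!
In the pair basis `e_k, f_k` every `E_r` with `r ≥ 1` is constant on the pairs `{2k, 2k+1}`, so the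
Laplacian lives entirely in the symmetric sector, where `U_e* E_{r+1} U_e = E_r` and
`U_e* E_1 U_e = 1`. Hence, in the frame `(U_e, U_f)`, `H_{n+1}` has the blocks `RΔ + p₁ + V_ff`,
`V_fe`, `V_fe`, `V_ff`. The Schur complement of `V_ff` is `(RH)_n`, because
`(a + b)/2 - (a - b)²/(2(a + b)) = 2ab/(a + b)`, and block inversion gives
`H_{n+1}⁻¹ = Sᵀ (RH)_n⁻¹ S + U_f V_ff⁻¹ U_f*`.
-/

open MeasureTheory ProbabilityTheory Matrix Filter Topology

noncomputable section

/-- Hierarchical (ultrametric) distance on `ℕ₀ = {0,1,2,…}`: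
`d(j,k) = min {r ≥ 0 | ⌊j/2^r⌋ = ⌊k/2^r⌋}`. -/
def hdist (j k : ℕ) : ℕ := sInf {r | j / 2 ^ r = k / 2 ^ r}

lemma hdist_comm (j k : ℕ) : hdist j k = hdist k j := by
  unfold hdist; congr 1; ext r; exact eq_comm

/-- Matrix entry of the hierarchical Laplacian `Δ = ∑_{r ≥ 1} p_r E_r`,
restricted to a block `B_n` (the entry only depends on the hierarchical distance):
`Δ(j,k) = ∑_{r ≥ max(1, d(j,k))} p_r · 2^{-r}`. -/
def lapEntry (p : ℕ → ℝ) (j k : ℕ) : ℝ :=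
  ∑' r : ℕ, if 1 ≤ r ∧ hdist j k ≤ r then p r / 2 ^ r else 0

/-- Matrix entry of the truncated Laplacian `∑_{r = 1}^{m} p_r E_r`. -/
def lapEntryT (p : ℕ → ℝ) (m : ℕ) (j k : ℕ) : ℝ :=
  ∑ r ∈ Finset.Icc 1 m, if hdist j k ≤ r then p r / 2 ^ r else 0

/-- The finite-volume Hamiltonian `H_n = 1_{B_n} (Δ + V) 1_{B_n}`
as a real symmetric `2^n × 2^n` matrix. -/
def Hmat (p : ℕ → ℝ) (v : ℕ → ℝ) (n : ℕ) : Matrix (Fin (2 ^ n)) (Fin (2 ^ n)) ℝ :=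
  fun j k => lapEntry p j k + if j = k then v j else 0

/-- The truncated finite-volume Hamiltonian
`H_{n,m} = 1_{B_n} (∑_{r=1}^m p_r E_r + V) 1_{B_n}`. -/
def HmatT (p : ℕ → ℝ) (v : ℕ → ℝ) (n m : ℕ) : Matrix (Fin (2 ^ n)) (Fin (2 ^ n)) ℝ :=
  fun j k => lapEntryT p m j k + if j = k then v j else 0

lemma Hmat_isHermitian (p : ℕ → ℝ) (v : ℕ → ℝ) (n : ℕ) : (Hmat p v n).IsHermitian := by
  refine Matrix.ext fun j k => ?_
  simp only [conjTranspose_apply, star_trivial, Hmat, lapEntry, hdist_comm (k : ℕ) (j : ℕ)]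
  rcases eq_or_ne j k with h | h
  · subst h; rfl
  · simp [h, h.symm]

lemma HmatT_isHermitian (p : ℕ → ℝ) (v : ℕ → ℝ) (n m : ℕ) : (HmatT p v n m).IsHermitian := by
  refine Matrix.ext fun j k => ?_
  simp only [conjTranspose_apply, star_trivial, HmatT, lapEntryT, hdist_comm (k : ℕ) (j : ℕ)]
  rcases eq_or_ne j k with h | h
  · subst h; rfl
  · simp [h, h.symm]

/-- The site `0 ∈ B_n`. -/
def fin0 (n : ℕ) : Fin (2 ^ n) := ⟨0, Nat.two_pow_pos n⟩

/-- `2k ∈ B_{n+1}` for `k ∈ B_n`. -/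
def dblFin {n : ℕ} (k : Fin (2 ^ n)) : Fin (2 ^ (n + 1)) :=
  ⟨2 * k, by have h := k.isLt; rw [pow_succ]; omega⟩

/-- `2k + 1 ∈ B_{n+1}` for `k ∈ B_n`. -/
def dblFin1 {n : ℕ} (k : Fin (2 ^ n)) : Fin (2 ^ (n + 1)) :=
  ⟨2 * k + 1, by have h := k.isLt; rw [pow_succ]; omega⟩

/-- Hopping sequence `(p_{r+1})_{r ≥ 1}` of the renormalized model. -/
def shiftSeq (p : ℕ → ℝ) : ℕ → ℝ := fun r => p (r + 1)

/-- The renormalized potential `(RV)_k = 2 V_{2k} V_{2k+1}/(V_{2k} + V_{2k+1}) + p_1`. -/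
def renPotM (p : ℕ → ℝ) (v : ℕ → ℝ) : ℕ → ℝ :=
  fun k => 2 * v (2 * k) * v (2 * k + 1) / (v (2 * k) + v (2 * k + 1)) + p 1

/-- The renormalized potential `(RV)_k = (1/(2 V_{2k}) + 1/(2 V_{2k+1}))⁻¹ + p_1`. -/
def renPotH (p : ℕ → ℝ) (v : ℕ → ℝ) : ℕ → ℝ :=
  fun k => (1 / (2 * v (2 * k)) + 1 / (2 * v (2 * k + 1)))⁻¹ + p 1

/-- The isometry `U_e : ℓ²(B_n) → ℓ²(B_{n+1})`, `U_e δ_k = (δ_{2k} + δ_{2k+1})/√2`,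
as a `2^{n+1} × 2^n` matrix. -/
def Uemat (n : ℕ) : Matrix (Fin (2 ^ (n + 1))) (Fin (2 ^ n)) ℝ :=
  fun j k => if (j : ℕ) = 2 * k then (Real.sqrt 2)⁻¹
    else if (j : ℕ) = 2 * k + 1 then (Real.sqrt 2)⁻¹ else 0

/-- The isometry `U_f : ℓ²(B_n) → ℓ²(B_{n+1})`, `U_f δ_k = (δ_{2k} - δ_{2k+1})/√2`,
as a `2^{n+1} × 2^n` matrix. -/
def Ufmat (n : ℕ) : Matrix (Fin (2 ^ (n + 1))) (Fin (2 ^ n)) ℝ :=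
  fun j k => if (j : ℕ) = 2 * k then (Real.sqrt 2)⁻¹
    else if (j : ℕ) = 2 * k + 1 then -(Real.sqrt 2)⁻¹ else 0

/-- The unitary `U = U_e ⊕ U_f : ℓ²(B_n) ⊕ ℓ²(B_n) → ℓ²(B_{n+1})`. -/
def Umat (n : ℕ) : Matrix (Fin (2 ^ (n + 1))) (Fin (2 ^ n) ⊕ Fin (2 ^ n)) ℝ :=
  Matrix.fromCols (Uemat n) (Ufmat n)

/-- `V_ff = V_ee`: multiplication by `(V_{2k} + V_{2k+1})/2` on `ℓ²(B_n)`. -/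
def Vffmat (v : ℕ → ℝ) (n : ℕ) : Matrix (Fin (2 ^ n)) (Fin (2 ^ n)) ℝ :=
  Matrix.diagonal fun k => (v (2 * k) + v (2 * k + 1)) / 2

/-- `V_fe = V_ef`: multiplication by `(V_{2k} - V_{2k+1})/2` on `ℓ²(B_n)`. -/
def Vfemat (v : ℕ → ℝ) (n : ℕ) : Matrix (Fin (2 ^ n)) (Fin (2 ^ n)) ℝ :=
  Matrix.diagonal fun k => (v (2 * k) - v (2 * k + 1)) / 2

/-- The operator `S = U_e^* - V_fe V_ff^{-1} U_f^* : ℓ²(B_{n+1}) → ℓ²(B_n)`. -/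
def Smat (v : ℕ → ℝ) (n : ℕ) : Matrix (Fin (2 ^ n)) (Fin (2 ^ (n + 1))) ℝ :=
  (Uemat n)ᵀ - Vfemat v n * (Vffmat v n)⁻¹ * (Ufmat n)ᵀ

/-- The maximally delocalized vector `φ_n = 2^{-n/2} 1_{B_n}`. -/
def phiVec (n : ℕ) : Fin (2 ^ n) → ℝ := fun _ => (Real.sqrt (2 ^ n))⁻¹

end

namespace Matrix

theorem mul_eq_of_add_mul_eq_one {m l₁ l₂ o R : Type*} [Fintype m] [DecidableEq m] [Fintype l₁]
    [Fintype l₂] [CommRing R] {E : Matrix m l₁ R} {F : Matrix m l₂ R} {E' : Matrix l₁ m R}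
    {F' : Matrix l₂ m R} (hEF : E * E' + F * F' = 1) (H : Matrix m m R) (X : Matrix m o R) :
    H * X = E * (E' * H * X) + F * (F' * H * X) := by
  calc H * X = (E * E' + F * F') * (H * X) := by rw [hEF, Matrix.one_mul]
    _ = _ := by simp only [Matrix.add_mul, Matrix.mul_assoc]

theorem inv_eq_of_add_mul_eq_one {m l₁ l₂ R : Type*} [Fintype m] [DecidableEq m] [Fintype l₁]
    [DecidableEq l₁] [Fintype l₂] [DecidableEq l₂] [CommRing R] {H : Matrix m m R}
    {E : Matrix m l₁ R} {F : Matrix m l₂ R} {E' : Matrix l₁ m R} {F' : Matrix l₂ m R}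
    {A : Matrix l₁ l₁ R} {B : Matrix l₁ l₂ R} {C : Matrix l₂ l₁ R} {D : Matrix l₂ l₂ R}
    (hEF : E * E' + F * F' = 1) (hA : E' * H * E = A) (hB : E' * H * F = B)
    (hC : F' * H * E = C) (hD : F' * H * F = D) (hDu : IsUnit D.det)
    (hSu : IsUnit (A - B * D⁻¹ * C).det) :
    H⁻¹ = (E - F * D⁻¹ * C) * (A - B * D⁻¹ * C)⁻¹ * (E' - B * D⁻¹ * F') + F * D⁻¹ * F' := by
  have hHE : H * E = E * A + F * C := by rw [mul_eq_of_add_mul_eq_one hEF, hA, hC]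
  have hHF : H * F = E * B + F * D := by rw [mul_eq_of_add_mul_eq_one hEF, hB, hD]
  have hDD : D * D⁻¹ = 1 := mul_nonsing_inv D hDu
  have hHT : H * (E - F * D⁻¹ * C) = E * (A - B * D⁻¹ * C) := by
    rw [Matrix.mul_sub, ← Matrix.mul_assoc, ← Matrix.mul_assoc, hHE, hHF, Matrix.add_mul,
      Matrix.add_mul, Matrix.mul_assoc F D, hDD, Matrix.mul_one, Matrix.mul_sub]
    simp only [Matrix.mul_assoc]
    abel
  refine inv_eq_right_inv ?_
  rw [Matrix.mul_add, ← Matrix.mul_assoc, ← Matrix.mul_assoc, hHT, Matrix.mul_assoc E,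
    mul_nonsing_inv _ hSu, Matrix.mul_one, ← Matrix.mul_assoc, ← Matrix.mul_assoc, hHF,
    Matrix.add_mul, Matrix.add_mul, Matrix.mul_assoc F D, hDD, Matrix.mul_one, Matrix.mul_sub,
    ← hEF]
  simp only [Matrix.mul_assoc]
  abel

theorem inv_diagonal_of_ne_zero {ι K : Type*} [Fintype ι] [DecidableEq ι] [Field K] {d : ι → K}
    (hd : ∀ i, d i ≠ 0) : (diagonal d)⁻¹ = diagonal fun i => (d i)⁻¹ :=
  inv_eq_right_inv <| by
    rw [diagonal_mul_diagonal, ← diagonal_one]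
    exact congrArg diagonal (funext fun i => mul_inv_cancel₀ (hd i))

theorem dotProduct_mul_mul_mulVec {m l₁ l₂ R : Type*} [Fintype m] [Fintype l₁] [Fintype l₂]
    [CommSemiring R] (N : Matrix m l₁ R) (M : Matrix l₁ l₂ R) (K : Matrix l₂ m R) (φ ψ : m → R) :
    φ ⬝ᵥ (N * M * K) *ᵥ ψ = Nᵀ *ᵥ φ ⬝ᵥ M *ᵥ (K *ᵥ ψ) := by
  rw [← mulVec_mulVec, ← mulVec_mulVec, dotProduct_mulVec, mulVec_transpose]

end Matrix

theorem Nat.div_two_pow_succ (c r : ℕ) : c / 2 ^ (r + 1) = c / 2 / 2 ^ r := by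
  rw [Nat.div_div_eq_div_mul, pow_succ']

theorem hdist_le_iff {j k r : ℕ} : hdist j k ≤ r ↔ j / 2 ^ r = k / 2 ^ r := by
  refine ⟨fun h => ?_, fun h => Nat.sInf_le h⟩
  have hmem : j / 2 ^ hdist j k = k / 2 ^ hdist j k := by
    refine Nat.sInf_mem (s := {r | j / 2 ^ r = k / 2 ^ r}) ⟨j + k, ?_⟩
    have hlt : ∀ i ≤ j + k, i < 2 ^ (j + k) := fun i hi =>
      Nat.lt_two_pow_self.trans_le (Nat.pow_le_pow_right two_pos hi)
    change j / _ = k / _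
    rw [Nat.div_eq_of_lt (hlt j (by omega)), Nat.div_eq_of_lt (hlt k (by omega))]
  obtain ⟨s, rfl⟩ := Nat.exists_eq_add_of_le h
  rw [pow_add, ← Nat.div_div_eq_div_mul, ← Nat.div_div_eq_div_mul, hmem]

theorem lapEntry_eq_tsum (p : ℕ → ℝ) (j k : ℕ) :
    lapEntry p j k = ∑' r, if 1 ≤ r ∧ j / 2 ^ r = k / 2 ^ r then p r / 2 ^ r else 0 := by
  simp only [lapEntry, hdist_le_iff]

theorem summable_ite_div_two_pow {p : ℕ → ℝ} (hp : Summable p) (C : ℕ → Prop) [DecidablePred C] :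
    Summable fun r => if C r then p r / 2 ^ r else 0 := by
  refine hp.abs.of_norm_bounded fun r => ?_
  split_ifs
  · rw [Real.norm_eq_abs, abs_div, abs_pow, abs_two]
    exact div_le_self (abs_nonneg _) (one_le_pow₀ one_le_two)
  · simp

/-- Entrywise form of `U_e* Δ U_e = RΔ + p₁`: a pair block of `Δ` has four equal entries. -/
theorem two_mul_lapEntry {p : ℕ → ℝ} (hp : Summable p) (a b : ℕ) :
    2 * lapEntry p a b =
      lapEntry (shiftSeq p) (a / 2) (b / 2) + if a / 2 = b / 2 then p 1 else 0 := by
  set h : ℕ → ℝ := fun r => if a / 2 / 2 ^ r = b / 2 / 2 ^ r then shiftSeq p r / 2 ^ r else 0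
  have hleft : 2 * lapEntry p a b = ∑' r, h r := by
    rw [lapEntry_eq_tsum, (summable_ite_div_two_pow hp _).tsum_eq_zero_add, if_neg (by simp),
      zero_add, ← tsum_mul_left]
    refine tsum_congr fun r => ?_
    simp only [le_add_iff_nonneg_left, zero_le, true_and, Nat.div_two_pow_succ, h, shiftSeq]
    split_ifs <;> ring
  have hright : lapEntry (shiftSeq p) (a / 2) (b / 2) = ∑' r, h r - h 0 := by
    have hh : Summable h := summable_ite_div_two_pow ((summable_nat_add_iff 1).2 hp) _
    rw [hh.tsum_eq_add_tsum_ite 0, add_sub_cancel_left, lapEntry_eq_tsum]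
    refine tsum_congr fun r => ?_
    simp only [h]
    split_ifs <;> first | rfl | omega
  simp [hleft, hright, h, shiftSeq]

theorem lapEntry_two_mul_div_two (p : ℕ → ℝ) (a b : ℕ) :
    lapEntry p (2 * (a / 2)) (2 * (b / 2)) = lapEntry p a b := by
  simp only [lapEntry_eq_tsum]
  refine tsum_congr fun r => if_congr (and_congr_right fun hr => ?_) rfl rfl
  obtain ⟨s, rfl⟩ := Nat.exists_eq_add_of_le' hr
  rw [Nat.div_two_pow_succ, Nat.div_two_pow_succ, Nat.div_two_pow_succ, Nat.div_two_pow_succ,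
    Nat.mul_div_cancel_left _ two_pos, Nat.mul_div_cancel_left _ two_pos]

theorem Hmat_succ_apply (p v : ℕ → ℝ) (n : ℕ) (a b : Fin (2 ^ (n + 1))) :
    Hmat p v (n + 1) a b = lapEntry p (2 * (a / 2)) (2 * (b / 2)) + if a = b then v a else 0 := by
  rw [Hmat, lapEntry_two_mul_div_two]

def pairMat {R : Type*} [Zero R] (n : ℕ) (x y : R) : Matrix (Fin (2 ^ (n + 1))) (Fin (2 ^ n)) R :=
  fun j k => if (j : ℕ) = 2 * k then x else if (j : ℕ) = 2 * k + 1 then y else 0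

theorem Uemat_eq_pairMat (n : ℕ) : Uemat n = pairMat n (√2)⁻¹ (√2)⁻¹ := rfl

theorem Ufmat_eq_pairMat (n : ℕ) : Ufmat n = pairMat n (√2)⁻¹ (-(√2)⁻¹) := rfl

section pairMat

variable {R : Type*} [CommRing R] {n : ℕ}

@[simp] theorem dblFin_val (k : Fin (2 ^ n)) : (dblFin k : ℕ) = 2 * k := rfl

@[simp] theorem dblFin1_val (k : Fin (2 ^ n)) : (dblFin1 k : ℕ) = 2 * k + 1 := rfl

@[simp] theorem dblFin_inj {j k : Fin (2 ^ n)} : dblFin j = dblFin k ↔ j = k := by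
  simp [Fin.ext_iff]

@[simp] theorem dblFin1_inj {j k : Fin (2 ^ n)} : dblFin1 j = dblFin1 k ↔ j = k := by
  simp [Fin.ext_iff]

theorem dblFin_ne_dblFin1 (j k : Fin (2 ^ n)) : dblFin j ≠ dblFin1 k := by
  simp only [ne_eq, Fin.ext_iff, dblFin_val, dblFin1_val]; omega

@[simp] theorem pairMat_dblFin (x y : R) (j k : Fin (2 ^ n)) :
    pairMat n x y (dblFin j) k = if j = k then x else 0 := by
  rcases eq_or_ne j k with rfl | h
  · simp [pairMat]
  · have h' : (j : ℕ) ≠ k := Fin.val_ne_of_ne h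
    rw [pairMat, if_neg h, dblFin_val, if_neg (by omega), if_neg (by omega)]

@[simp] theorem pairMat_dblFin1 (x y : R) (j k : Fin (2 ^ n)) :
    pairMat n x y (dblFin1 j) k = if j = k then y else 0 := by
  rcases eq_or_ne j k with rfl | h
  · simp [pairMat]
  · have h' : (j : ℕ) ≠ k := Fin.val_ne_of_ne h
    rw [pairMat, if_neg h, dblFin1_val, if_neg (by omega), if_neg (by omega)]

theorem sum_pairMat_mul (x y : R) (k : Fin (2 ^ n)) (f : Fin (2 ^ (n + 1)) → R) :
    ∑ a, pairMat n x y a k * f a = x * f (dblFin k) + y * f (dblFin1 k) := by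
  rw [Fintype.sum_eq_add _ _ (dblFin_ne_dblFin1 k k) fun a ha => ?_]
  · simp
  · simp only [pairMat, ne_eq, Fin.ext_iff, dblFin_val, dblFin1_val] at ha ⊢
    rw [if_neg ha.1, if_neg ha.2, zero_mul]

theorem sum_mul_pairMat (x y : R) (k : Fin (2 ^ n)) (f : Fin (2 ^ (n + 1)) → R) :
    ∑ a, f a * pairMat n x y a k = f (dblFin k) * x + f (dblFin1 k) * y := by
  simp only [mul_comm (f _), sum_pairMat_mul]

theorem transpose_pairMat_mul_pairMat (x₀ x₁ y₀ y₁ : R) :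
    (pairMat n x₀ x₁)ᵀ * pairMat n y₀ y₁ = (x₀ * y₀ + x₁ * y₁) • (1 : Matrix _ _ R) := by
  ext j k
  rw [mul_apply]
  simp only [transpose_apply, sum_pairMat_mul, pairMat_dblFin, pairMat_dblFin1, Matrix.smul_apply,
    one_apply, smul_eq_mul]
  split_ifs <;> ring

theorem transpose_pairMat_mul_mul_pairMat {M : Matrix (Fin (2 ^ (n + 1))) (Fin (2 ^ (n + 1))) R}
    {L : ℕ → ℕ → R} {w : ℕ → R}
    (hM : ∀ a b, M a b = L (a / 2) (b / 2) + if a = b then w a else 0) (x₀ x₁ y₀ y₁ : R) :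
    (pairMat n x₀ x₁)ᵀ * M * pairMat n y₀ y₁ =
      of (fun j k : Fin (2 ^ n) => (x₀ + x₁) * (y₀ + y₁) * L j k) +
        diagonal (fun k : Fin (2 ^ n) => x₀ * y₀ * w (2 * k) + x₁ * y₁ * w (2 * k + 1)) := by
  ext j k
  have hdiv : ∀ i : ℕ, 2 * i / 2 = i ∧ (2 * i + 1) / 2 = i := fun i => ⟨by omega, by omega⟩
  simp only [mul_apply, transpose_apply, sum_pairMat_mul, sum_mul_pairMat, hM, dblFin_val,
    dblFin1_val, hdiv, dblFin_inj, dblFin1_inj, dblFin_ne_dblFin1, (dblFin_ne_dblFin1 _ _).symm,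
    Matrix.add_apply, of_apply, diagonal_apply, if_false]
  split_ifs <;> ring

end pairMat

open TsirelsonInequality

theorem transpose_Uemat_mul_Hmat_mul_Uemat {p : ℕ → ℝ} (hp : Summable p) (v : ℕ → ℝ) (n : ℕ) :
    (Uemat n)ᵀ * Hmat p v (n + 1) * Uemat n =
      Hmat (shiftSeq p) (fun k => p 1 + (v (2 * k) + v (2 * k + 1)) / 2) n := by
  ext j k
  have hL := two_mul_lapEntry hp (2 * j) (2 * k)
  simp only [Nat.mul_div_cancel_left _ two_pos, Fin.val_inj] at hL
  rw [Uemat_eq_pairMat, transpose_pairMat_mul_mul_pairMat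
      (L := fun c d => lapEntry p (2 * c) (2 * d)) (Hmat_succ_apply p v n), Hmat]
  simp only [Matrix.add_apply, of_apply, diagonal_apply]
  split_ifs at hL ⊢
  · linear_combination (4 * lapEntry p (2 * j) (2 * k) + v (2 * j) + v (2 * j + 1)) *
      sqrt_two_inv_mul_self + hL
  · linear_combination 4 * lapEntry p (2 * j) (2 * k) * sqrt_two_inv_mul_self + hL

theorem transpose_Uemat_mul_Hmat_mul_Ufmat (p v : ℕ → ℝ) (n : ℕ) :
    (Uemat n)ᵀ * Hmat p v (n + 1) * Ufmat n = Vfemat v n := by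
  ext j k
  rw [Uemat_eq_pairMat, Ufmat_eq_pairMat,
    transpose_pairMat_mul_mul_pairMat
      (L := fun c d => lapEntry p (2 * c) (2 * d)) (Hmat_succ_apply p v n), Vfemat]
  simp only [Matrix.add_apply, of_apply, diagonal_apply]
  split_ifs
  · linear_combination (v (2 * j) - v (2 * j + 1)) * sqrt_two_inv_mul_self
  · ring

theorem transpose_Ufmat_mul_Hmat_mul_Uemat (p v : ℕ → ℝ) (n : ℕ) :
    (Ufmat n)ᵀ * Hmat p v (n + 1) * Uemat n = Vfemat v n := by
  have h := congrArg transpose (transpose_Uemat_mul_Hmat_mul_Ufmat p v n)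
  rwa [transpose_mul, transpose_mul, transpose_transpose, ← Matrix.mul_assoc,
    ← conjTranspose_eq_transpose_of_trivial (Hmat p v _), Hmat_isHermitian, Vfemat,
    diagonal_transpose] at h

theorem transpose_Ufmat_mul_Hmat_mul_Ufmat (p v : ℕ → ℝ) (n : ℕ) :
    (Ufmat n)ᵀ * Hmat p v (n + 1) * Ufmat n = Vffmat v n := by
  ext j k
  rw [Ufmat_eq_pairMat, transpose_pairMat_mul_mul_pairMat
      (L := fun c d => lapEntry p (2 * c) (2 * d)) (Hmat_succ_apply p v n), Vffmat]
  simp only [Matrix.add_apply, of_apply, diagonal_apply]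
  split_ifs
  · linear_combination (v (2 * j) + v (2 * j + 1)) * sqrt_two_inv_mul_self
  · ring

theorem Uemat_mul_transpose_add_Ufmat_mul_transpose (n : ℕ) :
    Uemat n * (Uemat n)ᵀ + Ufmat n * (Ufmat n)ᵀ = 1 := by
  let e : Fin (2 ^ (n + 1)) ≃ Fin (2 ^ n) ⊕ Fin (2 ^ n) :=
    (finCongr (by ring)).trans finSumFinEquiv.symm
  rw [← fromCols_mul_fromRows, fromCols_mul_fromRows_eq_one_comm e, fromRows_mul_fromCols,
    Uemat_eq_pairMat, Ufmat_eq_pairMat, transpose_pairMat_mul_pairMat,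
    transpose_pairMat_mul_pairMat, transpose_pairMat_mul_pairMat, transpose_pairMat_mul_pairMat,
    ← fromBlocks_one]
  norm_num [sqrt_two_inv_mul_self]

theorem isUnit_det_Vffmat {v : ℕ → ℝ} {n : ℕ}
    (hv : ∀ k : ℕ, k < 2 ^ n → v (2 * k) + v (2 * k + 1) ≠ 0) : IsUnit (Vffmat v n).det := by
  rw [Vffmat, det_diagonal]
  exact (Finset.prod_ne_zero_iff.2 fun (k : Fin (2 ^ n)) _ =>
    div_ne_zero (hv k k.isLt) two_ne_zero).isUnit

theorem Hmat_sub_Vfemat_mul_inv_Vffmat_mul_Vfemat {v : ℕ → ℝ} {n : ℕ} (p : ℕ → ℝ)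
    (hv : ∀ k : ℕ, k < 2 ^ n → v (2 * k) + v (2 * k + 1) ≠ 0) :
    Hmat (shiftSeq p) (fun k => p 1 + (v (2 * k) + v (2 * k + 1)) / 2) n -
        Vfemat v n * (Vffmat v n)⁻¹ * Vfemat v n =
      Hmat (shiftSeq p) (renPotM p v) n := by
  rw [Vffmat, inv_diagonal_of_ne_zero fun k : Fin (2 ^ n) => div_ne_zero (hv k k.isLt) two_ne_zero,
    Vfemat, diagonal_mul_diagonal, diagonal_mul_diagonal]
  ext j k
  simp only [Matrix.sub_apply, Hmat, diagonal_apply, renPotM]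
  split_ifs with hjk
  · subst hjk
    have hsum := hv j j.isLt
    field_simp
    ring
  · ring

theorem transpose_Smat (v : ℕ → ℝ) (n : ℕ) :
    (Smat v n)ᵀ = Uemat n - Ufmat n * (Vffmat v n)⁻¹ * Vfemat v n := by
  rw [Smat, transpose_sub, transpose_transpose, transpose_mul, transpose_mul, transpose_transpose,
    transpose_nonsing_inv, Vffmat, Vfemat, diagonal_transpose, diagonal_transpose,
    Matrix.mul_assoc]

theorem recovery_formula_general (n : ℕ) (p : ℕ → ℝ) (hps : Summable p) (v : ℕ → ℝ)
    (hv : ∀ k : ℕ, k < 2 ^ n → v (2 * k) + v (2 * k + 1) ≠ 0)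
    (hRH : IsUnit (Hmat (shiftSeq p) (renPotM p v) n).det)
    (φ ψ : Fin (2 ^ (n + 1)) → ℝ) :
    φ ⬝ᵥ (Hmat p v (n + 1))⁻¹.mulVec ψ =
      (Smat v n).mulVec φ ⬝ᵥ
        (Hmat (shiftSeq p) (renPotM p v) n)⁻¹.mulVec ((Smat v n).mulVec ψ) +
      (Ufmat n)ᵀ.mulVec φ ⬝ᵥ (Vffmat v n)⁻¹.mulVec ((Ufmat n)ᵀ.mulVec ψ) := by
  have hinv := inv_eq_of_add_mul_eq_one (Uemat_mul_transpose_add_Ufmat_mul_transpose n)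
    (transpose_Uemat_mul_Hmat_mul_Uemat hps v n) (transpose_Uemat_mul_Hmat_mul_Ufmat p v n)
    (transpose_Ufmat_mul_Hmat_mul_Uemat p v n) (transpose_Ufmat_mul_Hmat_mul_Ufmat p v n)
    (isUnit_det_Vffmat hv) (by rwa [Hmat_sub_Vfemat_mul_inv_Vffmat_mul_Vfemat p hv])
  rw [Hmat_sub_Vfemat_mul_inv_Vffmat_mul_Vfemat p hv, ← transpose_Smat, ← Smat] at hinv
  rw [hinv, add_mulVec, dotProduct_add, dotProduct_mul_mul_mulVec, dotProduct_mul_mul_mulVec,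
    transpose_transpose]

/-- **Recovery formula** (Corollary in Section 3): for `n ≥ 1` (written `n+1` here),
`⟨φ, H_{n+1}^{-1} ψ⟩ = ⟨Sφ, (RH)_n^{-1} Sψ⟩ + ⟨U_f^* φ, V_ff^{-1} U_f^* ψ⟩` where
`S = U_e^* - V_fe V_ff^{-1} U_f^*`. -/
theorem recovery_formula (n : ℕ) (p : ℕ → ℝ) (hps : Summable p) (v : ℕ → ℝ)
    (hv : ∀ k : ℕ, k < 2 ^ n → v (2 * k) + v (2 * k + 1) ≠ 0)
    (hH : IsUnit (Hmat p v (n + 1)).det)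
    (hRH : IsUnit (Hmat (shiftSeq p) (renPotM p v) n).det)
    (φ ψ : Fin (2 ^ (n + 1)) → ℝ) :
    φ ⬝ᵥ (Hmat p v (n + 1))⁻¹.mulVec ψ =
      (Smat v n).mulVec φ ⬝ᵥ
        (Hmat (shiftSeq p) (renPotM p v) n)⁻¹.mulVec ((Smat v n).mulVec ψ) +
      (Ufmat n)ᵀ.mulVec φ ⬝ᵥ (Vffmat v n)⁻¹.mulVec ((Ufmat n)ᵀ.mulVec ψ) :=
  recovery_formula_general n p hps v hv hRH φ ψ
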